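/- arXiv:2507.02218 — 2 statements merged into one kernel-verified Lean document; each statement's English description precedes it below -/
import Mathlib

section
/- For the canonically oriented quiver Q of type D̃_6 and λ ∈ k with λ ∉ {0, 1}, the representation M_λ is indecomposable (equivalently, its endomorphism ring is local, equivalently End(M_λ) ≅ k). -/
/-!
Every endomorphism of `M_λ` is scalar. At the vertices `3 = 4 = 5` it is one endomorphism of
`k²`, which must preserve the lines spanned by `(1,1)` and `(1,0)` (images of the arrows into
vertex 3) and by `(0,1)` (kernel of the arrow `5 → 6`); three distinct lines force a scalar, and
the scalar propagates to the one-dimensional vertices along the arrows. An isomorphism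
`M_λ ≅ A ⊕ B` would transport the projection onto `A`, which is `1` on `A` and `0` on `B`,
to a non-scalar endomorphism.
-/

open Quiver

/-- A representation of a quiver `V` over a field `k`. -/
structure QuivRep (k : Type) [Field k] (V : Type) [Quiver.{0} V] where
  space : V → Type
  [acg : ∀ i, AddCommGroup (space i)]
  [mod : ∀ i, Module k (space i)]
  map : ∀ {i j : V}, (i ⟶ j) → (space i →ₗ[k] space j)

attribute [instance] QuivRep.acg QuivRep.mod

/-- The arrows of the canonically oriented quiver of type `D̃₆`: vertices `1,…,7`
(indexed by `Fin 7`, so vertex `m` corresponds to `m - 1 : Fin 7`) and arrows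
`1→3, 2→3, 3→4, 4→5, 5→6, 5→7`. -/
inductive D6Arrow : Fin 7 → Fin 7 → Type
  | a13 : D6Arrow 0 2
  | a23 : D6Arrow 1 2
  | a34 : D6Arrow 2 3
  | a45 : D6Arrow 3 4
  | a56 : D6Arrow 4 5
  | a57 : D6Arrow 4 6

instance : Quiver.{0} (Fin 7) := ⟨D6Arrow⟩

/-- The vertex spaces of the representation `M_λ`: `k` at vertices `1, 2, 6, 7` and
`k²` at vertices `3, 4, 5`. -/
def MlambdaVtx (k : Type) (i : Fin 7) : Type :=
  match i with
  | 0 => k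
  | 1 => k
  | 2 => k × k
  | 3 => k × k
  | 4 => k × k
  | 5 => k
  | 6 => k

instance (k : Type) [Field k] (i : Fin 7) : AddCommGroup (MlambdaVtx k i) :=
  match i with
  | 0 => inferInstanceAs (AddCommGroup k)
  | 1 => inferInstanceAs (AddCommGroup k)
  | 2 => inferInstanceAs (AddCommGroup (k × k))
  | 3 => inferInstanceAs (AddCommGroup (k × k))
  | 4 => inferInstanceAs (AddCommGroup (k × k))
  | 5 => inferInstanceAs (AddCommGroup k)
  | 6 => inferInstanceAs (AddCommGroup k)

instance (k : Type) [Field k] (i : Fin 7) : Module k (MlambdaVtx k i) :=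
  match i with
  | 0 => inferInstanceAs (Module k k)
  | 1 => inferInstanceAs (Module k k)
  | 2 => inferInstanceAs (Module k (k × k))
  | 3 => inferInstanceAs (Module k (k × k))
  | 4 => inferInstanceAs (Module k (k × k))
  | 5 => inferInstanceAs (Module k k)
  | 6 => inferInstanceAs (Module k k)

/-- The regular representation `M_λ` of the canonically oriented quiver of type `D̃₆`:
arrow maps `[1,1]ᵀ : k → k²` along `1→3`, `[1,0]ᵀ : k → k²` along `2→3`, identity along
`3→4` and `4→5`, `[1,0] : k² → k` along `5→6` and `[1,λ] : k² → k` along `5→7`. -/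
def Mlambda (k : Type) [Field k] (lam : k) : QuivRep k (Fin 7) where
  space := MlambdaVtx k
  map {_ _} a :=
    match a with
    | .a13 => (LinearMap.id.prod LinearMap.id : k →ₗ[k] k × k)
    | .a23 => (LinearMap.id.prod 0 : k →ₗ[k] k × k)
    | .a34 => LinearMap.id
    | .a45 => LinearMap.id
    | .a56 => LinearMap.fst k k k
    | .a57 => LinearMap.fst k k k + lam • LinearMap.snd k k k

/-- Isomorphism of quiver representations: a family of vertex-wise linear isomorphisms
commuting with all the arrow maps. -/
def QuivRep.IsIsoTo {k : Type} [Field k] {V : Type} [Quiver.{0} V]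
    (M N : QuivRep k V) : Prop :=
  ∃ e : ∀ i, M.space i ≃ₗ[k] N.space i,
    ∀ (i j : V) (a : i ⟶ j),
      (e j).toLinearMap.comp (M.map a) = (N.map a).comp (e i).toLinearMap

/-- The direct sum of two representations: vertex-wise direct sums, with
block-diagonal arrow maps. -/
def QuivRep.directSum {k : Type} [Field k] {V : Type} [Quiver.{0} V]
    (M N : QuivRep k V) : QuivRep k V where
  space i := M.space i × N.space i
  map a := (M.map a).prodMap (N.map a)

/-- A representation is nonzero if some vertex space has a nonzero vector. -/
def QuivRep.Nonzero {k : Type} [Field k] {V : Type} [Quiver.{0} V]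
    (M : QuivRep k V) : Prop :=
  ∃ (i : V) (x : M.space i), x ≠ 0

namespace QuivRep

variable {k : Type} [Field k] {V : Type} [Quiver.{0} V]

def IsHom (M N : QuivRep k V) (f : ∀ i, M.space i →ₗ[k] N.space i) : Prop :=
  ∀ (i j : V) (a : i ⟶ j), (f j).comp (M.map a) = (N.map a).comp (f i)

def HasScalarEnd (M : QuivRep k V) : Prop :=
  ∀ f, IsHom M M f → ∃ c : k, ∀ i, f i = c • LinearMap.id

theorem IsHom.comp {M N P : QuivRep k V} {f : ∀ i, M.space i →ₗ[k] N.space i}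
    {g : ∀ i, N.space i →ₗ[k] P.space i} (hf : IsHom M N f) (hg : IsHom N P g) :
    IsHom M P fun i => (g i).comp (f i) := by
  intro i j a
  rw [LinearMap.comp_assoc, hf, ← LinearMap.comp_assoc, hg, LinearMap.comp_assoc]

theorem IsHom.symm {M N : QuivRep k V} {e : ∀ i, M.space i ≃ₗ[k] N.space i}
    (he : IsHom M N fun i => e i) : IsHom N M fun i => (e i).symm := by
  intro i j a
  ext x
  apply (e j).injective
  simpa using (LinearMap.congr_fun (he i j a) ((e i).symm x)).symm

def directSumProjFst (A B : QuivRep k V) (i : V) :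
    (A.directSum B).space i →ₗ[k] (A.directSum B).space i :=
  (LinearMap.inl k (A.space i) (B.space i)).comp (LinearMap.fst k _ _)

theorem isHom_directSumProjFst (A B : QuivRep k V) :
    IsHom (A.directSum B) (A.directSum B) (directSumProjFst A B) := by
  intro i j a
  ext x
  exact Prod.ext rfl (map_zero (B.map a)).symm

theorem not_isIsoTo_directSum_of_hasScalarEnd {M A B : QuivRep k V} (hM : M.HasScalarEnd)
    (hA : A.Nonzero) (hB : B.Nonzero) : ¬ M.IsIsoTo (A.directSum B) := by
  rintro ⟨e, he⟩
  replace he : IsHom M (A.directSum B) fun i => e i := he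
  obtain ⟨c, hc⟩ := hM _ ((he.comp (isHom_directSumProjFst A B)).comp he.symm)
  have hsmul : ∀ i (v : (A.directSum B).space i), v.1 = c • v.1 ∧ 0 = c • v.2 := by
    intro i v
    obtain ⟨u, rfl⟩ := (e i).surjective v
    have h : (e i).symm (directSumProjFst A B i (e i u)) = c • u := LinearMap.congr_fun (hc i) u
    rw [← (e i).injective.eq_iff, LinearEquiv.apply_symm_apply, map_smul] at h
    exact ⟨congrArg Prod.fst h, congrArg Prod.snd h⟩
  obtain ⟨i, x, hx⟩ := hA
  obtain ⟨j, y, hy⟩ := hB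
  have hc0 : c ≠ 0 := by
    rintro rfl
    exact hx (by simpa using (hsmul i (x, 0)).1)
  exact hy ((smul_eq_zero.mp (hsmul j (0, y)).2.symm).resolve_left hc0)

end QuivRep

theorem LinearMap.eq_smul_id_of_preserves_axes_diagonal {R : Type*} [CommSemiring R]
    (F : R × R →ₗ[R] R × R) (h10 : (F (1, 0)).2 = 0) (h01 : (F (0, 1)).1 = 0)
    (h11 : (F (1, 1)).1 = (F (1, 1)).2) : F = (F (1, 0)).1 • LinearMap.id := by
  have hsum : F (1, 1) = F (1, 0) + F (0, 1) := by rw [← map_add]; simp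
  rw [hsum, Prod.fst_add, Prod.snd_add, h10, h01, add_zero, zero_add] at h11
  ext <;> simp [h10, h01, h11]

theorem Mlambda_hasScalarEnd (k : Type) [Field k] (lam : k) : (Mlambda k lam).HasScalarEnd := by
  intro f hf
  -- The vertex spaces carry the instances of `MlambdaVtx`, which `rw` and `simp` do not identify
  -- with those of `k` and `k × k`, so the vertex maps are first restated at the honest types.
  obtain ⟨g0, hg0⟩ : ∃ g : k →ₗ[k] k, f 0 = g := ⟨f 0, rfl⟩
  obtain ⟨g1, hg1⟩ : ∃ g : k →ₗ[k] k, f 1 = g := ⟨f 1, rfl⟩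
  obtain ⟨F, hF⟩ : ∃ F : k × k →ₗ[k] k × k, f 2 = F := ⟨f 2, rfl⟩
  obtain ⟨g5, hg5⟩ : ∃ g : k →ₗ[k] k, f 5 = g := ⟨f 5, rfl⟩
  obtain ⟨g6, hg6⟩ : ∃ g : k →ₗ[k] k, f 6 = g := ⟨f 6, rfl⟩
  have h34 : f 3 = F := (hf 2 3 .a34).trans hF
  have h45 : f 4 = F := (hf 3 4 .a45).trans h34
  have h13 : F (1, 1) = (g0 1, g0 1) := by
    rw [← hF, ← hg0]; exact LinearMap.congr_fun (hf 0 2 .a13) (1 : k)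
  have h23 : F (1, 0) = (g1 1, 0) := by
    rw [← hF, ← hg1]; exact LinearMap.congr_fun (hf 1 2 .a23) (1 : k)
  have h56 (v : k × k) : g5 v.1 = (F v).1 := by
    rw [← hg5, ← h45]; exact LinearMap.congr_fun (hf 4 5 .a56) v
  have h57 (v : k × k) : g6 (v.1 + lam * v.2) = (F v).1 + lam * (F v).2 := by
    rw [← hg6, ← h45]; exact LinearMap.congr_fun (hf 4 6 .a57) v
  set c := g1 1
  have hFc : F = c • LinearMap.id := by
    simpa [h23] using LinearMap.eq_smul_id_of_preserves_axes_diagonal F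
      (by rw [h23]) (by rw [← h56 (0, 1), map_zero]) (by rw [h13])
  have of_apply_one (g : k →ₗ[k] k) (hg : g 1 = c) : g = c • LinearMap.id :=
    LinearMap.ext_ring (by simp [hg])
  refine ⟨c, fun i => ?_⟩
  fin_cases i
  · refine hg0.trans (of_apply_one g0 ?_)
    simpa [hFc] using (congrArg Prod.fst h13).symm
  · exact hg1.trans (of_apply_one g1 rfl)
  · exact hF.trans hFc
  · exact h34.trans hFc
  · exact h45.trans hFc
  · refine hg5.trans (of_apply_one g5 ?_)
    simpa [hFc] using h56 (1, 0)
  · refine hg6.trans (of_apply_one g6 ?_)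
    simpa [hFc] using h57 (1, 0)

theorem Mlambda_indecomposable_general (k : Type) [Field k]
    (lam : k) :
    (Mlambda k lam).Nonzero ∧
    ¬ ∃ A B : QuivRep k (Fin 7), A.Nonzero ∧ B.Nonzero ∧
        (Mlambda k lam).IsIsoTo (A.directSum B) := by
  refine ⟨⟨0, (1 : k), one_ne_zero (α := k)⟩, ?_⟩
  rintro ⟨A, B, hA, hB, hiso⟩
  exact QuivRep.not_isIsoTo_directSum_of_hasScalarEnd (Mlambda_hasScalarEnd k lam) hA hB hiso

/-- For the canonically oriented quiver of type `D̃₆` over an algebraically closed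
field `k` and `λ ∉ {0, 1}`, the representation `M_λ` is indecomposable: it is nonzero
and not isomorphic to a direct sum of two nonzero representations. -/
theorem Mlambda_indecomposable (k : Type) [Field k] [IsAlgClosed k]
    (lam : k) (h0 : lam ≠ 0) (h1 : lam ≠ 1) :
    (Mlambda k lam).Nonzero ∧
    ¬ ∃ A B : QuivRep k (Fin 7), A.Nonzero ∧ B.Nonzero ∧
        (Mlambda k lam).IsIsoTo (A.directSum B) :=
  Mlambda_indecomposable_general k lam
end

section
/- For the canonically oriented quiver Q of type D̃_6, the representations M_0 and M_1 are not isomorphic, and more generally M_{λ_1} ≇ M_{λ_2} whenever λ_1 ≠ λ_2 in k. -/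
open Quiver

/-! An isomorphism `M_{λ₁} ≅ M_{λ₂}` is, at the vertices `3, 4, 5` (joined by identities), one
automorphism `φ` of `k²`. Compatibility with the arrows from `1` and `2` and with `[1,0]` into `6`
makes `φ` preserve the lines spanned by `(1,1)`, `(1,0)` and `(0,1)`, so `φ = b • id` with `b ≠ 0`.
The arrow `5 → 7` then reads `ψ ∘ [1,λ₁] = b • [1,λ₂]`, and evaluating at `(λ₁, -1)`, which spans
the kernel of `[1,λ₁]`, gives `b (λ₁ - λ₂) = 0`. -/

theorem LinearMap.eq_smul_id_of_preserves_lines {R : Type*} [CommRing R] (φ : R × R →ₗ[R] R × R)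
    {a b : R} (h11 : φ (1, 1) = (a, a)) (h10 : φ (1, 0) = (b, 0)) (h01 : (φ (0, 1)).1 = 0) :
    φ = b • LinearMap.id := by
  have h01' : φ (0, 1) = (a - b, a) := by
    rw [show ((0 : R), (1 : R)) = (1, 1) - (1, 0) by simp, map_sub, h11, h10, Prod.mk_sub_mk,
      sub_zero]
  have hab : a = b := sub_eq_zero.mp (by simpa [h01'] using h01)
  refine LinearMap.prod_ext (LinearMap.ext_ring ?_) (LinearMap.ext_ring ?_)
  · simpa using h10
  · simpa [hab] using h01'

theorem eq_of_comp_fst_add_smul_snd_eq {R : Type*} [CommRing R] [NoZeroDivisors R]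
    (ψ : R →ₗ[R] R) {b lam₁ lam₂ : R} (hb : b ≠ 0)
    (h : ψ ∘ₗ (LinearMap.fst R R R + lam₁ • LinearMap.snd R R R)
      = (LinearMap.fst R R R + lam₂ • LinearMap.snd R R R) ∘ₗ (b • LinearMap.id)) :
    lam₁ = lam₂ := by
  have hker := LinearMap.congr_fun h (lam₁, -1)
  simp only [LinearMap.comp_apply, LinearMap.add_apply, LinearMap.smul_apply, LinearMap.fst_apply,
    LinearMap.snd_apply, LinearMap.id_apply, Prod.smul_mk, smul_eq_mul, mul_neg, mul_one,
    add_neg_cancel, map_zero] at hker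
  exact mul_left_cancel₀ hb (by linear_combination -hker)

theorem Mlambda_iso_center_eq_smul_id {k : Type} [Field k] {lam₁ lam₂ : k}
    (e : ∀ i, (Mlambda k lam₁).space i ≃ₗ[k] (Mlambda k lam₂).space i)
    (he : ∀ (i j : Fin 7) (a : i ⟶ j),
      (e j).toLinearMap ∘ₗ (Mlambda k lam₁).map a = (Mlambda k lam₂).map a ∘ₗ (e i).toLinearMap) :
    ∃ b : k, b ≠ 0 ∧ ((e 4).toLinearMap : k × k →ₗ[k] k × k) = b • LinearMap.id := by
  let φ : k × k →ₗ[k] k × k := (e 4).toLinearMap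
  have h42 : φ = (e 2).toLinearMap := (he 3 4 .a45).trans (he 2 3 .a34)
  have h11 : φ (1, 1) = (e 0 (1 : k), e 0 (1 : k)) := by
    rw [h42]; exact LinearMap.congr_fun (he 0 2 .a13) (1 : k)
  have h10 : φ (1, 0) = (e 1 (1 : k), 0) := by
    rw [h42]; exact LinearMap.congr_fun (he 1 2 .a23) (1 : k)
  have h01 : (φ (0, 1)).1 = 0 :=
    (LinearMap.congr_fun (he 4 5 .a56) ((0 : k), (1 : k))).symm.trans (map_zero (e 5))
  exact ⟨_, (e 1).map_ne_zero_iff.mpr (one_ne_zero : (1 : k) ≠ 0),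
    φ.eq_smul_id_of_preserves_lines h11 h10 h01⟩

theorem Mlambda_not_iso_general (k : Type) [Field k]
    (lam₁ lam₂ : k) (h : lam₁ ≠ lam₂) :
    ¬ (Mlambda k lam₁).IsIsoTo (Mlambda k lam₂) := by
  rintro ⟨e, he⟩
  obtain ⟨b, hb, hcenter⟩ := Mlambda_iso_center_eq_smul_id e he
  have h57 : (e 6).toLinearMap ∘ₗ (LinearMap.fst k k k + lam₁ • LinearMap.snd k k k)
      = (LinearMap.fst k k k + lam₂ • LinearMap.snd k k k) ∘ₗ (b • LinearMap.id) :=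
    hcenter ▸ he 4 6 .a57
  exact h (eq_of_comp_fst_add_smul_snd_eq (e 6).toLinearMap hb h57)

/-- For the canonically oriented quiver of type `D̃₆` over an algebraically closed
field `k`, the representations `M_{λ₁}` and `M_{λ₂}` are not isomorphic whenever
`λ₁ ≠ λ₂`; in particular `M₀ ≇ M₁`. -/
theorem Mlambda_not_iso (k : Type) [Field k] [IsAlgClosed k]
    (lam₁ lam₂ : k) (h : lam₁ ≠ lam₂) :
    ¬ (Mlambda k lam₁).IsIsoTo (Mlambda k lam₂) :=
  Mlambda_not_iso_general k lam₁ lam₂ h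
end
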